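/- Almost surely, lim_{n→∞} n·Y_n/(Y_1 + Y_2 + ⋯ + Y_n) = 0. -/

import Mathlib

/-!
Write `Y n = exp (-S (n - 1))` with `S m = E 0 + ⋯ + E (m - 1)`, and let `B j` be the sum of the
`E k` with `2 ^ j ≤ k + 1 < 2 ^ (j + 1)`. As `E k` has mean `(k + 1)⁻¹` and variance `(k + 1)⁻²`,
`B j` has mean at least `log 2` and variance at most `2⁻ʲ`, so by Chebyshev and Borel–Cantelli,
almost surely `B j > log 2 - δ` for all large `j`, for every `δ > 0`.

Then `a j = 2 ^ j * Y (2 ^ j)` satisfies `a (j + 1) = 2 e^{-B j} a j ≤ e^δ a j` eventually; with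
`δ = 1 / m` the last `m` terms of `a 0 + ⋯ + a j` are each at least `a j / e`, so
`a j / (a 0 + ⋯ + a j) → 0`. Cauchy condensation bounds `a 0 + ⋯ + a j` by `2 (Y 1 + ⋯ + Y n)`,
and `n * Y n ≤ 2 a j`, whenever `2 ^ j ≤ n < 2 ^ (j + 1)`.
-/

open MeasureTheory ProbabilityTheory Filter Real Set Topology
open scoped Nat

lemma toReal_gammaPDF_one {r : ℝ} (hr : 0 < r) (x : ℝ) :
    (gammaPDF 1 r x).toReal = (Ici 0).indicator (fun x => r * exp (-(r * x))) x := by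
  by_cases hx : 0 ≤ x
  · simp [gammaPDF, gammaPDFReal, hx, hr.le, (exp_pos _).le]
  · simp [gammaPDF, gammaPDFReal, hx]

lemma integral_expMeasure_eq_integral_Ioi {r : ℝ} (hr : 0 < r) (g : ℝ → ℝ) :
    ∫ x, g x ∂expMeasure r = ∫ x in Ioi 0, r * exp (-(r * x)) * g x := by
  rw [expMeasure, gammaMeasure, integral_withDensity_eq_integral_toReal_smul
    (show Measurable (gammaPDF 1 r) from (measurable_gammaPDFReal 1 r).ennreal_ofReal)
    (ae_of_all _ fun _ => ENNReal.ofReal_lt_top), ← integral_Ici_eq_integral_Ioi,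
    ← integral_indicator measurableSet_Ici]
  simp_rw [toReal_gammaPDF_one hr, smul_eq_mul, ← indicator_mul_left]

lemma integrable_expMeasure_iff {r : ℝ} (hr : 0 < r) {g : ℝ → ℝ} :
    Integrable g (expMeasure r) ↔ IntegrableOn (fun x => r * exp (-(r * x)) * g x) (Ioi 0) := by
  rw [expMeasure, gammaMeasure, integrable_withDensity_iff_integrable_smul'
    (show Measurable (gammaPDF 1 r) from (measurable_gammaPDFReal 1 r).ennreal_ofReal)
    (ae_of_all _ fun _ => ENNReal.ofReal_lt_top), ← integrableOn_Ici_iff_integrableOn_Ioi,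
    ← integrable_indicator_iff measurableSet_Ici]
  simp_rw [toReal_gammaPDF_one hr, smul_eq_mul, ← indicator_mul_left]

lemma integral_Ioi_pow_mul_exp_neg_mul {r : ℝ} (hr : 0 < r) (n : ℕ) :
    ∫ x in Ioi 0, x ^ n * exp (-(r * x)) = n ! / r ^ (n + 1) := by
  have := integral_rpow_mul_exp_neg_mul_Ioi (a := n + 1) (by positivity) hr
  rw [Gamma_nat_eq_factorial, add_sub_cancel_right, ← Nat.cast_succ, rpow_natCast] at this
  simp_rw [rpow_natCast] at this
  rw [this, one_div, inv_pow, inv_mul_eq_div]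

lemma integrable_pow_expMeasure {r : ℝ} (hr : 0 < r) (n : ℕ) :
    Integrable (fun x => x ^ n) (expMeasure r) := by
  have := integrableOn_rpow_mul_exp_neg_mul_rpow (s := n) (p := 1) (b := r)
    (by linarith [n.cast_nonneg (α := ℝ)]) one_pos hr
  simp only [rpow_natCast, rpow_one, neg_mul] at this
  exact (integrable_expMeasure_iff hr).2 <|
    (this.const_mul r).congr <| ae_of_all _ fun x => by ring

lemma integral_pow_expMeasure {r : ℝ} (hr : 0 < r) (n : ℕ) :
    ∫ x, x ^ n ∂expMeasure r = n ! / r ^ n := by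
  simp_rw [integral_expMeasure_eq_integral_Ioi hr, mul_assoc, integral_const_mul,
    mul_comm (exp _), integral_Ioi_pow_mul_exp_neg_mul hr, pow_succ]
  field_simp

lemma memLp_two_id_expMeasure {r : ℝ} (hr : 0 < r) : MemLp id 2 (expMeasure r) :=
  (memLp_two_iff_integrable_sq aestronglyMeasurable_id).2 (integrable_pow_expMeasure hr 2)

lemma integral_id_expMeasure {r : ℝ} (hr : 0 < r) : ∫ x, x ∂expMeasure r = r⁻¹ := by
  simpa using integral_pow_expMeasure hr 1

lemma variance_id_expMeasure {r : ℝ} (hr : 0 < r) : Var[id; expMeasure r] = (r ^ 2)⁻¹ := by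
  have := isProbabilityMeasure_expMeasure hr
  rw [variance_eq_sub (memLp_two_id_expMeasure hr)]
  simp only [Pi.pow_apply, id_eq, integral_pow_expMeasure hr, integral_id_expMeasure hr,
    Nat.factorial_two, Nat.cast_two]
  ring

lemma ae_nonneg_expMeasure (r : ℝ) : ∀ᵐ x ∂expMeasure r, 0 ≤ x := by
  simp_rw [ae_iff, not_le]
  change expMeasure r (Iio 0) = 0
  rw [expMeasure, gammaMeasure, withDensity_apply _ measurableSet_Iio]
  exact lintegral_gammaPDF_of_nonpos le_rfl

lemma log_two_le_sum_Ico_inv {N : ℕ} (hN : 0 < N) :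
    log 2 ≤ ∑ k ∈ Finset.Ico N (2 * N), (k : ℝ)⁻¹ := by
  have hN' : (0 : ℝ) < N := by exact_mod_cast hN
  calc log 2 = ∫ x in (N : ℝ)..((2 * N : ℕ) : ℝ), x⁻¹ := by
        rw [integral_inv, Nat.cast_mul, Nat.cast_two, mul_div_cancel_right₀ _ hN'.ne']
        rw [uIcc_of_le (by push_cast; linarith)]
        exact fun h => hN'.not_ge h.1
    _ ≤ _ := (inv_antitoneOn_Icc_right hN').integral_le_sum_Ico (by omega)

lemma sum_Ico_inv_sq_le {N : ℕ} (hN : 0 < N) :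
    ∑ k ∈ Finset.Ico N (2 * N), ((k : ℝ) ^ 2)⁻¹ ≤ (N : ℝ)⁻¹ := by
  have hN' : (0 : ℝ) < N := by exact_mod_cast hN
  calc ∑ k ∈ Finset.Ico N (2 * N), ((k : ℝ) ^ 2)⁻¹
      ≤ (Finset.Ico N (2 * N)).card • ((N : ℝ) ^ 2)⁻¹ :=
        Finset.sum_le_card_nsmul _ _ _ fun k hk => by
          gcongr; exact_mod_cast (Finset.mem_Ico.1 hk).1
    _ = (N : ℝ)⁻¹ := by
        rw [Nat.card_Ico, nsmul_eq_mul, show 2 * N - N = N by omega]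
        field_simp

def dyadicBlock (j : ℕ) : Finset ℕ := Finset.Ico (2 ^ j - 1) (2 ^ (j + 1) - 1)

lemma sum_dyadicBlock_add_one {M : Type*} [AddCommMonoid M] (f : ℕ → M) (j : ℕ) :
    ∑ k ∈ dyadicBlock j, f (k + 1) = ∑ k ∈ Finset.Ico (2 ^ j) (2 * 2 ^ j), f k := by
  rw [dyadicBlock, Finset.sum_Ico_add', pow_succ', Nat.sub_add_cancel Nat.one_le_two_pow,
    Nat.sub_add_cancel (by have := Nat.one_le_two_pow (n := j); omega)]

lemma log_two_le_sum_dyadicBlock (j : ℕ) : log 2 ≤ ∑ k ∈ dyadicBlock j, ((k : ℝ) + 1)⁻¹ := by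
  have := log_two_le_sum_Ico_inv (N := 2 ^ j) (by positivity)
  rw [← sum_dyadicBlock_add_one] at this
  exact_mod_cast this

lemma sum_dyadicBlock_inv_sq_le (j : ℕ) :
    ∑ k ∈ dyadicBlock j, (((k : ℝ) + 1) ^ 2)⁻¹ ≤ (1 / 2) ^ j := by
  have := sum_Ico_inv_sq_le (N := 2 ^ j) (by positivity)
  rw [← sum_dyadicBlock_add_one] at this
  simpa using this

section Probability

variable {Ω : Type*} [MeasurableSpace Ω] {P : Measure Ω}

lemma ProbabilityTheory.HasLaw.memLp_two_of_expMeasure {X : Ω → ℝ} {r : ℝ} (hr : 0 < r)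
    (hX : HasLaw X (expMeasure r) P) : MemLp X 2 P :=
  (memLp_map_measure_iff aestronglyMeasurable_id hX.aemeasurable).1
    (hX.map_eq ▸ memLp_two_id_expMeasure hr)

lemma measure_sum_le_sum_inv_sub_le [IsFiniteMeasure P] {ι : Type*} {E : ι → Ω → ℝ}
    {r : ι → ℝ} (hr : ∀ i, 0 < r i) (hE : ∀ i, HasLaw (E i) (expMeasure (r i)) P)
    (hindep : iIndepFun E P) (s : Finset ι) {c : ℝ} (hc : 0 < c) :
    P {ω | ∑ i ∈ s, E i ω ≤ ∑ i ∈ s, (r i)⁻¹ - c} ≤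
      ENNReal.ofReal ((∑ i ∈ s, (r i ^ 2)⁻¹) / c ^ 2) := by
  have hL2 (i : ι) : MemLp (E i) 2 P := (hE i).memLp_two_of_expMeasure (hr i)
  have hmean : P[∑ i ∈ s, E i] = ∑ i ∈ s, (r i)⁻¹ := by
    simp_rw [Finset.sum_apply]
    rw [integral_finsetSum s fun i _ => (hL2 i).integrable one_le_two]
    exact Finset.sum_congr rfl fun i _ => by
      rw [(hE i).integral_eq, integral_id_expMeasure (hr i)]
  have hvar : Var[∑ i ∈ s, E i; P] = ∑ i ∈ s, (r i ^ 2)⁻¹ := by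
    rw [IndepFun.variance_sum (fun i _ => hL2 i) fun i _ j _ hij => hindep.indepFun hij]
    exact Finset.sum_congr rfl fun i _ => by
      rw [(hE i).variance_eq, variance_id_expMeasure (hr i)]
  calc P {ω | ∑ i ∈ s, E i ω ≤ ∑ i ∈ s, (r i)⁻¹ - c}
      ≤ P {ω | c ≤ |(∑ i ∈ s, E i) ω - P[∑ i ∈ s, E i]|} := by
        refine measure_mono fun ω hω => ?_
        rw [Set.mem_ofPred_eq] at hω ⊢
        rw [hmean, Finset.sum_apply, abs_sub_comm]
        exact le_abs.2 (Or.inl (by linarith))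
    _ ≤ _ := hvar ▸ meas_ge_le_variance_div_sq (memLp_finsetSum' s fun i _ => hL2 i) hc

lemma measure_sum_dyadicBlock_le_log_two_sub_le [IsFiniteMeasure P] {E : ℕ → Ω → ℝ}
    (hE : ∀ k, HasLaw (E k) (expMeasure (k + 1)) P) (hindep : iIndepFun E P) (j : ℕ) {c : ℝ}
    (hc : 0 < c) :
    P {ω | ∑ k ∈ dyadicBlock j, E k ω ≤ log 2 - c} ≤ ENNReal.ofReal ((c ^ 2)⁻¹ * (1 / 2) ^ j) :=
  calc _ ≤ P {ω | ∑ k ∈ dyadicBlock j, E k ω ≤ ∑ k ∈ dyadicBlock j, ((k : ℝ) + 1)⁻¹ - c} :=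
        measure_mono fun ω hω => by
          simp only [Set.mem_ofPred_eq] at hω ⊢
          linarith [log_two_le_sum_dyadicBlock j]
    _ ≤ ENNReal.ofReal ((∑ k ∈ dyadicBlock j, (((k : ℝ) + 1) ^ 2)⁻¹) / c ^ 2) :=
        measure_sum_le_sum_inv_sub_le (fun k => by positivity) hE hindep _ hc
    _ ≤ _ := by
        rw [div_eq_inv_mul]
        gcongr
        exact sum_dyadicBlock_inv_sq_le j

lemma ae_forall_eventually_log_two_sub_lt_sum_dyadicBlock [IsFiniteMeasure P]
    {E : ℕ → Ω → ℝ} (hE : ∀ k, HasLaw (E k) (expMeasure (k + 1)) P) (hindep : iIndepFun E P) :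
    ∀ᵐ ω ∂P, ∀ δ > 0, ∀ᶠ j in atTop, log 2 - δ < ∑ k ∈ dyadicBlock j, E k ω := by
  have key (m : ℕ) : ∀ᵐ ω ∂P, ∀ᶠ j in atTop,
      log 2 - ((m : ℝ) + 1)⁻¹ < ∑ k ∈ dyadicBlock j, E k ω := by
    have hsum : ∑' j, P {ω | ∑ k ∈ dyadicBlock j, E k ω ≤ log 2 - ((m : ℝ) + 1)⁻¹} ≠ ⊤ := by
      refine ne_top_of_le_ne_top ?_ (ENNReal.tsum_le_tsum fun j =>
        measure_sum_dyadicBlock_le_log_two_sub_le hE hindep j (by positivity))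
      rw [← ENNReal.ofReal_tsum_of_nonneg (fun j => by positivity)
        (summable_geometric_two.mul_left _)]
      exact ENNReal.ofReal_ne_top
    filter_upwards [ae_eventually_notMem hsum] with ω hω
    simpa only [Set.mem_ofPred_eq, not_le] using hω
  filter_upwards [ae_all_iff.2 key] with ω hω δ hδ
  obtain ⟨m, hm⟩ := exists_nat_one_div_lt hδ
  filter_upwards [hω m] with j hj
  rw [one_div] at hm
  linarith

end Probability

lemma le_exp_mul_mul_of_succ_le_exp_mul {a : ℕ → ℝ} {δ : ℝ} {J : ℕ}
    (h : ∀ j ≥ J, a (j + 1) ≤ exp δ * a j) {k : ℕ} (hk : J ≤ k) (i : ℕ) :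
    a (k + i) ≤ exp (i * δ) * a k := by
  induction i with
  | zero => simp
  | succ i ih =>
    calc a (k + i + 1) ≤ exp δ * a (k + i) := h _ (by omega)
      _ ≤ exp δ * (exp (i * δ) * a k) := by gcongr
      _ = exp ((i + 1 : ℕ) * δ) * a k := by push_cast; rw [← mul_assoc, ← exp_add]; ring_nf

lemma tendsto_div_sum_range_of_eventually_le_exp_mul {a : ℕ → ℝ} (ha : ∀ j, 0 < a j)
    (h : ∀ δ > 0, ∀ᶠ j in atTop, a (j + 1) ≤ exp δ * a j) :
    Tendsto (fun j => a j / ∑ i ∈ Finset.range (j + 1), a i) atTop (𝓝 0) := by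
  refine tendsto_order.2 ⟨fun ε hε => Eventually.of_forall fun j =>
    hε.trans_le (div_nonneg (ha j).le (Finset.sum_nonneg fun i _ => (ha i).le)), fun ε hε => ?_⟩
  obtain ⟨m, hm⟩ := exists_nat_gt (exp 1 / ε)
  have hm0 : (0 : ℝ) < m := (by positivity : 0 < exp 1 / ε).trans hm
  obtain ⟨J, hJ⟩ := eventually_atTop.1 (h (m : ℝ)⁻¹ (inv_pos.2 hm0))
  filter_upwards [eventually_ge_atTop (J + m)] with j hj
  have hlow (i : ℕ) (hi : i < m) : a j ≤ exp 1 * a (j - i) := by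
    calc a j = a (j - i + i) := by rw [Nat.sub_add_cancel (by omega)]
      _ ≤ exp (i * (m : ℝ)⁻¹) * a (j - i) :=
        le_exp_mul_mul_of_succ_le_exp_mul hJ (by omega) i
      _ ≤ exp 1 * a (j - i) := by
        gcongr
        · exact (ha _).le
        · rw [← div_eq_mul_inv, div_le_one hm0]; exact_mod_cast hi.le
  have hsum : m * a j ≤ exp 1 * ∑ i ∈ Finset.range (j + 1), a i :=
    calc m * a j = ∑ i ∈ Finset.range m, a j := by simp
      _ ≤ ∑ i ∈ Finset.range m, exp 1 * a (j - i) :=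
        Finset.sum_le_sum fun i hi => hlow i (Finset.mem_range.1 hi)
      _ ≤ ∑ i ∈ Finset.range (j + 1), exp 1 * a (j + 1 - 1 - i) :=
        Finset.sum_le_sum_of_subset_of_nonneg (Finset.range_subset_range.2 (by omega))
          fun i _ _ => by have := ha (j + 1 - 1 - i); positivity
      _ = exp 1 * ∑ i ∈ Finset.range (j + 1), a i := by
        rw [Finset.sum_range_reflect (fun i => exp 1 * a i), Finset.mul_sum]
  have hpos : 0 < ∑ i ∈ Finset.range (j + 1), a i :=
    Finset.sum_pos (fun i _ => ha i) Finset.nonempty_range_add_one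
  rw [div_lt_iff₀ hpos]
  rw [div_lt_iff₀ hε] at hm
  nlinarith [ha j]

lemma sum_range_two_pow_mul_le_two_mul_sum_Icc {Y : ℕ → ℝ} (hY : Antitone Y)
    (hnonneg : ∀ n, 0 ≤ Y n) {j n : ℕ} (hj : 2 ^ j ≤ n) :
    ∑ i ∈ Finset.range (j + 1), 2 ^ i * Y (2 ^ i) ≤ 2 * ∑ k ∈ Finset.Icc 1 n, Y k := by
  have hcond := Finset.sum_condensed_le (fun m n _ hmn => hY hmn) j
  simp only [nsmul_eq_mul, Nat.cast_pow, Nat.cast_ofNat] at hcond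
  have hn : 1 ≤ n := Nat.one_le_two_pow.trans hj
  have hsplit : ∑ k ∈ Finset.Icc 1 n, Y k = Y 1 + ∑ k ∈ Finset.Ico 2 (n + 1), Y k := by
    rw [← Finset.Ico_add_one_right_eq_Icc, Finset.sum_eq_sum_Ico_succ_bot (by omega)]
  have hsub : ∑ k ∈ Finset.Ico 2 (2 ^ j + 1), Y k ≤ ∑ k ∈ Finset.Ico 2 (n + 1), Y k :=
    Finset.sum_le_sum_of_subset_of_nonneg (Finset.Ico_subset_Ico_right (by omega))
      fun k _ _ => hnonneg k
  linarith [hnonneg 1]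

lemma tendsto_mul_div_sum_Icc_of_condensed {Y : ℕ → ℝ} (hY : Antitone Y) (hpos : ∀ n, 0 < Y n)
    (h : Tendsto (fun j => 2 ^ j * Y (2 ^ j) / ∑ i ∈ Finset.range (j + 1), 2 ^ i * Y (2 ^ i))
      atTop (𝓝 0)) :
    Tendsto (fun n : ℕ => n * Y n / ∑ k ∈ Finset.Icc 1 n, Y k) atTop (𝓝 0) := by
  have hlog : Tendsto (Nat.log 2) atTop atTop :=
    tendsto_atTop_atTop.2 fun J => ⟨2 ^ J, fun n hn => Nat.le_log_of_pow_le one_lt_two hn⟩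
  refine squeeze_zero' (Eventually.of_forall fun n => ?_) ?_
    (by simpa using (h.comp hlog).const_mul 4)
  · exact div_nonneg (by have := hpos n; positivity) (Finset.sum_nonneg fun k _ => (hpos k).le)
  filter_upwards [eventually_ge_atTop 1] with n hn
  suffices key : ∀ j, 2 ^ j ≤ n → n < 2 ^ (j + 1) → n * Y n / ∑ k ∈ Finset.Icc 1 n, Y k ≤
      4 * (2 ^ j * Y (2 ^ j) / ∑ i ∈ Finset.range (j + 1), 2 ^ i * Y (2 ^ i)) from
    key _ (Nat.pow_log_le_self 2 (by omega)) (Nat.lt_pow_succ_log_self one_lt_two n)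
  intro j hj hj'
  have hYj := hpos (2 ^ j)
  have hnum : n * Y n ≤ 2 * (2 ^ j * Y (2 ^ j)) := by
    have : (n : ℝ) ≤ 2 * 2 ^ j := by rw [← pow_succ']; exact_mod_cast hj'.le
    calc (n : ℝ) * Y n ≤ (2 * 2 ^ j) * Y (2 ^ j) :=
          mul_le_mul this (hY hj) (hpos n).le (by positivity)
      _ = _ := by ring
  have hden := sum_range_two_pow_mul_le_two_mul_sum_Icc hY (fun k => (hpos k).le) hj
  have hb : 0 < ∑ i ∈ Finset.range (j + 1), 2 ^ i * Y (2 ^ i) :=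
    Finset.sum_pos (fun i _ => by have := hpos (2 ^ i); positivity) Finset.nonempty_range_add_one
  calc n * Y n / ∑ k ∈ Finset.Icc 1 n, Y k
      ≤ 2 * (2 ^ j * Y (2 ^ j)) / ((∑ i ∈ Finset.range (j + 1), 2 ^ i * Y (2 ^ i)) / 2) := by
        gcongr
        linarith
    _ = _ := by field_simp; ring

lemma two_pow_succ_mul_exp_neg_sum_le {e : ℕ → ℝ} {δ : ℝ} {j : ℕ}
    (h : log 2 - δ < ∑ k ∈ dyadicBlock j, e k) :
    2 ^ (j + 1) * exp (-∑ k ∈ Finset.range (2 ^ (j + 1) - 1), e k) ≤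
      exp δ * (2 ^ j * exp (-∑ k ∈ Finset.range (2 ^ j - 1), e k)) := by
  have hle : 2 ^ j - 1 ≤ 2 ^ (j + 1) - 1 :=
    Nat.sub_le_sub_right (Nat.pow_le_pow_right two_pos j.le_succ) 1
  rw [← Finset.sum_range_add_sum_Ico _ hle, ← dyadicBlock]
  calc 2 ^ (j + 1) * exp (-(∑ k ∈ Finset.range (2 ^ j - 1), e k + ∑ k ∈ dyadicBlock j, e k))
      = exp (log 2 - ∑ k ∈ dyadicBlock j, e k) *
          (2 ^ j * exp (-∑ k ∈ Finset.range (2 ^ j - 1), e k)) := by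
        rw [exp_sub, exp_log two_pos, neg_add, exp_add, exp_neg (∑ k ∈ dyadicBlock j, e k),
          pow_succ]
        ring
    _ ≤ _ := by gcongr; linarith

/-- `E k` is the variable `E_{k+1}` of rate `k + 1`, so `Y n` involves `E 0, …, E (n - 2)`. -/
theorem zipfian_atlas_completeness_as
    {Ω : Type*} [MeasureSpace Ω] [IsProbabilityMeasure (ℙ : Measure Ω)]
    (E : ℕ → Ω → ℝ)
    (hmeas : ∀ k, Measurable (E k))
    (hindep : iIndepFun E ℙ)
    (hdist : ∀ k : ℕ, Measure.map (E k) ℙ = expMeasure (k + 1))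
    (Y : ℕ → Ω → ℝ)
    (hY : ∀ n : ℕ, ∀ ω, Y n ω = Real.exp (-(∑ k ∈ Finset.range (n - 1), E k ω))) :
    ∀ᵐ ω ∂(ℙ : Measure Ω),
      Tendsto (fun n : ℕ => (n : ℝ) * Y n ω / (∑ k ∈ Finset.Icc 1 n, Y k ω))
        atTop (nhds 0) := by
  have hE (k : ℕ) : HasLaw (E k) (expMeasure (k + 1)) ℙ := ⟨(hmeas k).aemeasurable, hdist k⟩
  have hnonneg : ∀ᵐ ω, ∀ k, 0 ≤ E k ω := ae_all_iff.2 fun k =>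
    ((hE k).ae_iff (measurableSet_setOfPred.1 measurableSet_Ici)).2 (ae_nonneg_expMeasure _)
  filter_upwards [hnonneg, ae_forall_eventually_log_two_sub_lt_sum_dyadicBlock hE hindep]
    with ω hω hblock
  simp_rw [hY]
  refine tendsto_mul_div_sum_Icc_of_condensed (fun m n hmn => ?_) (fun n => exp_pos _)
    (tendsto_div_sum_range_of_eventually_le_exp_mul (fun j => by positivity) fun δ hδ => ?_)
  · exact exp_le_exp.2 <| neg_le_neg <| Finset.sum_le_sum_of_subset_of_nonneg
      (Finset.range_subset_range.2 (Nat.sub_le_sub_right hmn 1)) fun k _ _ => hω k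
  · filter_upwards [hblock δ hδ] with j hj
    exact two_pow_succ_mul_exp_neg_sum_le hj
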